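/- For every ε ∈ (0,1) and every c ∈ (0,∞): ∫_0^∞ (y/(1−ε)) · e^{−y²/(2(1−ε))} · (e^{−(y−c)²/(2ε)} − e^{−(y+c)²/(2ε)}) dy = √(2π) · √(ε(1−ε)) · c · e^{−c²/2}. -/

import Mathlib

open MeasureTheory Set Real

/-!
Multiplying the two Gaussian factors and completing the square turns the integrand into
`e^{-c²/2}/(1-ε) · y (e^{-b(y-m)²} - e^{-b(y+m)²})` with `b = 1/(2ε(1-ε))` and `m = (1-ε)c`.
Since `y e^{-b(y+m)²}` is minus the reflection of `y e^{-b(y-m)²}` under `y ↦ -y`, the half-line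
integral of the difference is the full-line first moment `∫ y e^{-b(y-m)²} dy = m √(π/b)`.
-/

theorem integral_eq_zero_of_odd {f : ℝ → ℝ} (hf : ∀ x, f (-x) = -f x) : ∫ x, f x = 0 := by
  have h := integral_neg_eq_self f volume
  simp only [hf, integral_neg] at h
  linarith

theorem integral_Ioi_add_comp_neg {E : Type*} [NormedAddCommGroup E] [NormedSpace ℝ E]
    {f : ℝ → E} (hf : Integrable f) : ∫ x in Ioi 0, (f x + f (-x)) = ∫ x, f x := by
  rw [integral_add hf.integrableOn hf.comp_neg.integrableOn, integral_comp_neg_Ioi, neg_zero,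
    add_comm, intervalIntegral.integral_Iic_add_Ioi hf.integrableOn hf.integrableOn]

theorem integral_mul_exp_neg_mul_sq (b : ℝ) : ∫ x, x * exp (-b * x ^ 2) = 0 :=
  integral_eq_zero_of_odd fun x => by rw [neg_sq, neg_mul]

section FirstMoment

variable {b : ℝ}

theorem integrable_mul_exp_neg_mul_sub_sq (hb : 0 < b) (m : ℝ) :
    Integrable fun x => x * exp (-b * (x - m) ^ 2) := by
  have h : Integrable fun x => (x + m) * exp (-b * x ^ 2) := by
    simpa only [add_mul, Pi.add_def] using
      (integrable_mul_exp_neg_mul_sq hb).add ((integrable_exp_neg_mul_sq hb).const_mul m)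
  simpa only [sub_add_cancel] using h.comp_sub_right m

theorem integral_mul_exp_neg_mul_sub_sq (hb : 0 < b) (m : ℝ) :
    ∫ x, x * exp (-b * (x - m) ^ 2) = m * √(π / b) := by
  calc ∫ x, x * exp (-b * (x - m) ^ 2)
      = ∫ x, (x + m) * exp (-b * x ^ 2) := by
        simpa only [add_sub_cancel_right] using
          (integral_add_right_eq_self (fun x => x * exp (-b * (x - m) ^ 2)) m).symm
    _ = (∫ x, x * exp (-b * x ^ 2)) + ∫ x, m * exp (-b * x ^ 2) := by
        simp only [add_mul]
        exact integral_add (integrable_mul_exp_neg_mul_sq hb)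
          ((integrable_exp_neg_mul_sq hb).const_mul m)
    _ = m * √(π / b) := by
        rw [integral_mul_exp_neg_mul_sq, integral_const_mul, integral_gaussian, zero_add]

theorem integral_Ioi_mul_exp_neg_mul_sub_sq_sub (hb : 0 < b) (m : ℝ) :
    ∫ x in Ioi 0, x * (exp (-b * (x - m) ^ 2) - exp (-b * (x + m) ^ 2)) = m * √(π / b) := by
  rw [← integral_mul_exp_neg_mul_sub_sq hb m,
    ← integral_Ioi_add_comp_neg (integrable_mul_exp_neg_mul_sub_sq hb m)]
  congr 1 with x
  rw [show (-x - m) ^ 2 = (x + m) ^ 2 by ring]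
  ring

end FirstMoment

theorem exp_neg_sq_div_mul_exp_neg_sub_sq_div {s t : ℝ} (hs : s ≠ 0) (ht : t ≠ 0)
    (hst : s + t = 1) (x c : ℝ) :
    exp (-x ^ 2 / (2 * s)) * exp (-(x - c) ^ 2 / (2 * t))
      = exp (-c ^ 2 / 2) * exp (-(2 * (s * t))⁻¹ * (x - s * c) ^ 2) := by
  rw [← exp_add, ← exp_add]
  congr 1
  obtain rfl : t = 1 - s := by linarith
  field_simp
  ring

theorem integral_identity_two_general (ε : ℝ) (hε : ε ∈ Set.Ioo (0 : ℝ) 1) (c : ℝ) :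
    ∫ y in Set.Ioi (0 : ℝ), (y / (1 - ε)) * Real.exp (-y ^ 2 / (2 * (1 - ε)))
        * (Real.exp (-(y - c) ^ 2 / (2 * ε)) - Real.exp (-(y + c) ^ 2 / (2 * ε)))
      = Real.sqrt (2 * Real.pi) * Real.sqrt (ε * (1 - ε)) * c * Real.exp (-c ^ 2 / 2) := by
  obtain ⟨hε0, hε1⟩ := hε
  have hs : 1 - ε ≠ 0 := sub_ne_zero.2 hε1.ne'
  set b := (2 * ((1 - ε) * ε))⁻¹
  have hb : 0 < b := by
    have := sub_pos.2 hε1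
    positivity
  have hsq := exp_neg_sq_div_mul_exp_neg_sub_sq_div hs hε0.ne' (sub_add_cancel 1 ε)
  have hintegrand : ∀ y, (y / (1 - ε)) * exp (-y ^ 2 / (2 * (1 - ε)))
        * (exp (-(y - c) ^ 2 / (2 * ε)) - exp (-(y + c) ^ 2 / (2 * ε)))
      = exp (-c ^ 2 / 2) / (1 - ε) * (y * (exp (-b * (y - (1 - ε) * c) ^ 2)
          - exp (-b * (y + (1 - ε) * c) ^ 2))) := by
    intro y
    have hplus := hsq y (-c)
    rw [sub_neg_eq_add, neg_sq, mul_neg, sub_neg_eq_add] at hplus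
    linear_combination y / (1 - ε) * hsq y c - y / (1 - ε) * hplus
  simp_rw [hintegrand]
  rw [integral_const_mul, integral_Ioi_mul_exp_neg_mul_sub_sq_sub hb,
    show π / b = 2 * π * (ε * (1 - ε)) by simp only [b, div_inv_eq_mul]; ring,
    sqrt_mul (by positivity)]
  field_simp

/-- **Integral identity (Lemma B.2, first part).** For `ε ∈ (0,1)` and `c > 0`,
`∫_0^∞ (y/(1-ε)) e^{-y²/(2(1-ε))} (e^{-(y-c)²/(2ε)} - e^{-(y+c)²/(2ε)}) dy
  = √(2π) √(ε(1-ε)) c e^{-c²/2}`. -/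
theorem integral_identity_two (ε : ℝ) (hε : ε ∈ Set.Ioo (0 : ℝ) 1) (c : ℝ) (hc : 0 < c) :
    ∫ y in Set.Ioi (0 : ℝ), (y / (1 - ε)) * Real.exp (-y ^ 2 / (2 * (1 - ε)))
        * (Real.exp (-(y - c) ^ 2 / (2 * ε)) - Real.exp (-(y + c) ^ 2 / (2 * ε)))
      = Real.sqrt (2 * Real.pi) * Real.sqrt (ε * (1 - ε)) * c * Real.exp (-c ^ 2 / 2) :=
  integral_identity_two_general ε hε c
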